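/- If S₁,…,S_k : ℝ³ → ℝ³ are similarity transformations with ratios s₁,…,s_k satisfying s₁² + ⋯ + s_k² < 1, and A ⊆ ℝ³ is a nonempty compact set with A = S₁(A) ∪ ⋯ ∪ S_k(A), then the 2-dimensional Hausdorff measure of A is zero. -/

import Mathlib

/-!
Iterating `A ⊆ ⋃ i, Sᵢ(A)` `n` times covers `A` by the images of `A` under the compositions
`S_{w₀} ∘ ⋯ ∘ S_{wₙ₋₁}` along words `w` of length `n`. Such a piece has diameter at most
`s_{w₀} ⋯ s_{wₙ₋₁} · diam A`, so the `d`-th powers of the diameters sum to at most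
`(∑ sᵢ ^ d) ^ n · (diam A) ^ d → 0`, while the diameters themselves tend to `0` uniformly.
-/

open MeasureTheory Metric Filter Topology
open scoped NNReal ENNReal

section WordMap

variable {X ι : Type*}

def wordMap (S : ι → X → X) : (n : ℕ) → (Fin n → ι) → X → X
  | 0, _ => id
  | n + 1, w => S (w 0) ∘ wordMap S n (Fin.tail w)

theorem subset_iUnion_wordMap_image {S : ι → X → X} {A : Set X}
    (hA : A ⊆ ⋃ i, S i '' A) (n : ℕ) : A ⊆ ⋃ w : Fin n → ι, wordMap S n w '' A := by
  induction n with
  | zero => exact fun x hx => Set.mem_iUnion.2 ⟨Fin.elim0, x, hx, rfl⟩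
  | succ n ih =>
    intro x hx
    obtain ⟨i, y, hy, rfl⟩ := Set.mem_iUnion.1 (hA hx)
    obtain ⟨w, z, hz, rfl⟩ := Set.mem_iUnion.1 (ih hy)
    refine Set.mem_iUnion.2 ⟨Fin.cons i w, z, hz, ?_⟩
    simp [wordMap]

theorem lipschitzWith_wordMap [PseudoEMetricSpace X] {S : ι → X → X} {σ : ι → ℝ≥0}
    (hS : ∀ i, LipschitzWith (σ i) (S i)) (n : ℕ) (w : Fin n → ι) :
    LipschitzWith (∏ j, σ (w j)) (wordMap S n w) := by
  induction n with
  | zero => simpa [wordMap] using LipschitzWith.id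
  | succ n ih =>
    rw [Fin.prod_univ_succ]
    exact (hS (w 0)).comp (ih (Fin.tail w))

variable [PseudoEMetricSpace X] {S : ι → X → X} {σ : ι → ℝ≥0}

theorem ediam_wordMap_image_le_pow (hS : ∀ i, LipschitzWith (σ i) (S i)) {c : ℝ≥0}
    (hc : ∀ i, σ i ≤ c) (A : Set X) (n : ℕ) (w : Fin n → ι) :
    ediam (wordMap S n w '' A) ≤ (c : ℝ≥0∞) ^ n * ediam A := by
  refine ((lipschitzWith_wordMap hS n w).ediam_image_le A).trans (mul_le_mul_left ?_ _)
  calc ((∏ j, σ (w j) : ℝ≥0) : ℝ≥0∞) ≤ ((c ^ n : ℝ≥0) : ℝ≥0∞) := by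
        gcongr
        exact (Finset.prod_le_prod' fun j _ => hc (w j)).trans (by simp)
    _ = (c : ℝ≥0∞) ^ n := by push_cast; rfl

theorem sum_ediam_wordMap_image_rpow_le [Fintype ι] (hS : ∀ i, LipschitzWith (σ i) (S i)) {d : ℝ}
    (hd : 0 ≤ d) (A : Set X) (n : ℕ) :
    ∑ w : Fin n → ι, ediam (wordMap S n w '' A) ^ d ≤
      (∑ i, (σ i : ℝ≥0∞) ^ d) ^ n * ediam A ^ d := by
  calc ∑ w : Fin n → ι, ediam (wordMap S n w '' A) ^ d
      ≤ ∑ w : Fin n → ι, (((∏ j, σ (w j) : ℝ≥0) : ℝ≥0∞) * ediam A) ^ d := by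
        gcongr with w
        exact (lipschitzWith_wordMap hS n w).ediam_image_le A
    _ = (∑ w : Fin n → ι, ∏ j, (σ (w j) : ℝ≥0∞) ^ d) * ediam A ^ d := by
        simp only [Finset.sum_mul, ENNReal.mul_rpow_of_nonneg _ _ hd, ENNReal.ofNNReal_finsetProd,
          ENNReal.prod_rpow_of_nonneg hd]
    _ = (∑ i, (σ i : ℝ≥0∞) ^ d) ^ n * ediam A ^ d := by
        rw [Fintype.sum_pow]

end WordMap

theorem hausdorffMeasure_eq_zero_of_subset_iUnion_image {X ι : Type*} [EMetricSpace X]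
    [MeasurableSpace X] [BorelSpace X] [Fintype ι] {S : ι → X → X} {σ : ι → ℝ≥0}
    (hS : ∀ i, LipschitzWith (σ i) (S i)) {d : ℝ} (hd : 0 < d) (hσ : ∑ i, σ i ^ d < 1)
    {A : Set X} (hA : ediam A ≠ ∞) (hself : A ⊆ ⋃ i, S i '' A) : μH[d] A = 0 := by
  set c : ℝ≥0 := Finset.univ.sup σ
  have hc1 : c < 1 := by
    refine (Finset.sup_lt_iff zero_lt_one).2 fun i _ => ?_
    rw [← NNReal.rpow_lt_rpow_iff hd, NNReal.one_rpow]
    exact (Finset.single_le_sum (fun j _ => zero_le) (Finset.mem_univ i)).trans_lt hσ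
  have hq1 : ∑ i, (σ i : ℝ≥0∞) ^ d < 1 := by
    simp only [← ENNReal.coe_rpow_of_nonneg _ hd.le]
    exact_mod_cast hσ
  have hpieces_small : Tendsto (fun n : ℕ => (c : ℝ≥0∞) ^ n * ediam A) atTop (𝓝 0) := by
    simpa using ENNReal.Tendsto.mul_const (ENNReal.tendsto_pow_atTop_nhds_zero_of_lt_one
      (ENNReal.coe_lt_one_iff.2 hc1)) (Or.inr hA)
  have hsums_small : Tendsto (fun n : ℕ => (∑ i, (σ i : ℝ≥0∞) ^ d) ^ n * ediam A ^ d)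
      atTop (𝓝 0) := by
    simpa using ENNReal.Tendsto.mul_const (ENNReal.tendsto_pow_atTop_nhds_zero_of_lt_one hq1)
      (Or.inr (ENNReal.rpow_ne_top_of_nonneg hd.le hA))
  refine le_antisymm ?_ zero_le
  calc μH[d] A ≤ liminf (fun n : ℕ => ∑ w : Fin n → ι, ediam (wordMap S n w '' A) ^ d) atTop :=
        Measure.hausdorffMeasure_le_liminf_sum d A _ hpieces_small _
          (.of_forall (ediam_wordMap_image_le_pow hS (Finset.le_sup <| Finset.mem_univ ·) A))
          (.of_forall (subset_iUnion_wordMap_image hself))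
    _ ≤ liminf (fun n : ℕ => (∑ i, (σ i : ℝ≥0∞) ^ d) ^ n * ediam A ^ d) atTop :=
        liminf_le_liminf (.of_forall (sum_ediam_wordMap_image_rpow_le hS hd.le A))
    _ = 0 := hsums_small.liminf_eq

theorem stmt0_general (k : ℕ)
    (S : Fin k → EuclideanSpace ℝ (Fin 3) → EuclideanSpace ℝ (Fin 3))
    (s : Fin k → ℝ)
    (hsim : ∀ i x y, dist (S i x) (S i y) = s i * dist x y)
    (hsum : ∑ i, (s i) ^ 2 < 1)
    (A : Set (EuclideanSpace ℝ (Fin 3))) (hcomp : IsCompact A)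
    (hself : A = ⋃ i, S i '' A) :
    μH[2] A = 0 := by
  have hS : ∀ i, LipschitzWith (s i).toNNReal (S i) := fun i =>
    .of_dist_le_mul fun x y => by
      rw [hsim]; gcongr; exact Real.le_coe_toNNReal _
  have hσ : ∑ i, (s i).toNNReal ^ (2 : ℝ) < 1 := by
    rw [← NNReal.coe_lt_coe]
    push_cast
    refine lt_of_le_of_lt (Finset.sum_le_sum fun i _ => ?_) hsum
    rw [Real.rpow_two, Real.coe_toNNReal', sq_le_sq, abs_of_nonneg (le_max_right _ _)]
    exact max_le (le_abs_self _) (abs_nonneg _)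
  exact hausdorffMeasure_eq_zero_of_subset_iUnion_image hS two_pos hσ
    hcomp.isBounded.ediam_ne_top hself.subset

/-- If `S₁,…,S_k` are similarity transformations of `ℝ³` with ratios `s₁,…,s_k`
satisfying `s₁² + ⋯ + s_k² < 1`, and `A` is a nonempty compact set with
`A = S₁(A) ∪ ⋯ ∪ S_k(A)`, then the 2-dimensional Hausdorff measure of `A` is zero. -/
theorem stmt0 (k : ℕ)
    (S : Fin k → EuclideanSpace ℝ (Fin 3) → EuclideanSpace ℝ (Fin 3))
    (s : Fin k → ℝ) (hs : ∀ i, 0 < s i)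
    (hsim : ∀ i x y, dist (S i x) (S i y) = s i * dist x y)
    (hsum : ∑ i, (s i) ^ 2 < 1)
    (A : Set (EuclideanSpace ℝ (Fin 3))) (hne : A.Nonempty) (hcomp : IsCompact A)
    (hself : A = ⋃ i, S i '' A) :
    μH[2] A = 0 :=
  stmt0_general k S s hsim hsum A hcomp hself
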